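/- Let h_φ, h_ω be positive definite n×n matrices with eigenprojection decompositions h_φ = Σᵢ αᵢ eᵢ, h_ω = Σⱼ βⱼ fⱼ. Then ‖eᵢ h_ω^{1/2} fⱼ‖²_HS = βⱼ Tr(eᵢ fⱼ), and consequently the Araki relative entropy satisfies S(φ,ω) = Σ_{i,j} βⱼ log(βⱼ/αᵢ) Tr(eᵢ fⱼ). -/
import Mathlib


open Matrix

/-- Let `h_φ = Σᵢ αᵢ eᵢ`, `h_ω = Σⱼ βⱼ fⱼ` be positive definite density matrices with
eigenprojection decompositions, and let `h_ω^{1/2} = Σⱼ √βⱼ fⱼ`.  Then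
`‖eᵢ h_ω^{1/2} fⱼ‖²_HS = βⱼ Tr(eᵢ fⱼ)`, and consequently Araki's relative entropy
`S(φ,ω) = −⟨h_ω^{1/2}, (log Δ)(h_ω^{1/2})⟩_HS`, where
`log Δ = Σ_{i,j} log(αᵢ/βⱼ) m_{ij}` with `m_{ij}(a) = eᵢ a fⱼ`, satisfies
`S(φ,ω) = Σ_{i,j} βⱼ log(βⱼ/αᵢ) Tr(eᵢ fⱼ)`. -/
theorem relative_entropy_eigenprojection_formula {d : ℕ} {I J : Type*} [Fintype I] [Fintype J]
    (e : I → Matrix (Fin d) (Fin d) ℂ) (f : J → Matrix (Fin d) (Fin d) ℂ)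
    (α : I → ℝ) (β : J → ℝ) (hα : ∀ i, 0 < α i) (hβ : ∀ j, 0 < β j)
    (heproj : ∀ i, (e i)ᴴ = e i ∧ e i * e i = e i)
    (heorth : ∀ i i', i ≠ i' → e i * e i' = 0) (hesum : ∑ i, e i = 1)
    (hfproj : ∀ j, (f j)ᴴ = f j ∧ f j * f j = f j)
    (hforth : ∀ j j', j ≠ j' → f j * f j' = 0) (hfsum : ∑ j, f j = 1)
    (hφM hωM : Matrix (Fin d) (Fin d) ℂ)
    (hφdef : hφM = ∑ i, (α i : ℂ) • e i) (hωdef : hωM = ∑ j, (β j : ℂ) • f j) :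
    (∀ (i : I) (j : J),
        Matrix.trace ((e i * (∑ j', ((Real.sqrt (β j') : ℝ) : ℂ) • f j') * f j)ᴴ *
            (e i * (∑ j', ((Real.sqrt (β j') : ℝ) : ℂ) • f j') * f j))
          = ((β j : ℝ) : ℂ) * Matrix.trace (e i * f j)) ∧
    -(Matrix.trace ((∑ j', ((Real.sqrt (β j') : ℝ) : ℂ) • f j')ᴴ *
          (∑ i, ∑ j, ((Real.log (α i / β j) : ℝ) : ℂ) •
            (e i * (∑ j', ((Real.sqrt (β j') : ℝ) : ℂ) • f j') * f j))))
      = ∑ i, ∑ j, ((β j * Real.log (β j / α i) : ℝ) : ℂ) * Matrix.trace (e i * f j) := by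

  set s : Matrix (Fin d) (Fin d) ℂ := ∑ j', ((Real.sqrt (β j') : ℝ) : ℂ) • f j' with hs
  have hsf : ∀ j, s * f j = ((Real.sqrt (β j) : ℝ) : ℂ) • f j := by
    intro j
    rw [hs, Finset.sum_mul, Finset.sum_eq_single j]
    · rw [smul_mul_assoc, (hfproj j).2]
    · intro b _ hb; rw [smul_mul_assoc, hforth b j hb, smul_zero]
    · intro h; exact absurd (Finset.mem_univ j) h
  have hfs : ∀ j, f j * s = ((Real.sqrt (β j) : ℝ) : ℂ) • f j := by
    intro j
    rw [hs, Finset.mul_sum, Finset.sum_eq_single j]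
    · rw [mul_smul_comm, (hfproj j).2]
    · intro b _ hb; rw [mul_smul_comm, hforth j b (Ne.symm hb), smul_zero]
    · intro h; exact absurd (Finset.mem_univ j) h
  have hsH : sᴴ = s := by
    rw [hs, Matrix.conjTranspose_sum]
    refine Finset.sum_congr rfl fun j _ => ?_
    rw [Matrix.conjTranspose_smul, (hfproj j).1, Complex.star_def, Complex.conj_ofReal]
  have hsq : ∀ j, ((Real.sqrt (β j) : ℝ) : ℂ) * ((Real.sqrt (β j) : ℝ) : ℂ) = ((β j : ℝ) : ℂ) := by
    intro j
    rw [← Complex.ofReal_mul, Real.mul_self_sqrt (hβ j).le]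
  have key : ∀ i j, e i * s * f j = ((Real.sqrt (β j) : ℝ) : ℂ) • (e i * f j) := by
    intro i j
    rw [mul_assoc, hsf j, mul_smul_comm]
  have htr : ∀ i j, Matrix.trace (f j * e i * f j) = Matrix.trace (e i * f j) := by
    intro i j
    rw [Matrix.trace_mul_cycle, (hfproj j).2, Matrix.trace_mul_comm]
  constructor
  · intro i j
    rw [key i j, Matrix.conjTranspose_smul, Matrix.conjTranspose_mul, (heproj i).1,
      (hfproj j).1, smul_mul_assoc, mul_smul_comm, Matrix.trace_smul, Matrix.trace_smul,
      Complex.star_def, Complex.conj_ofReal, mul_assoc, ← mul_assoc (e i), (heproj i).2,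
      smul_eq_mul, smul_eq_mul, ← mul_assoc, hsq j, ← mul_assoc, htr i j]
  · rw [hsH, Finset.mul_sum]
    simp only [Finset.mul_sum, Matrix.trace_sum]
    rw [← Finset.sum_neg_distrib]
    refine Finset.sum_congr rfl fun i _ => ?_
    rw [← Finset.sum_neg_distrib]
    refine Finset.sum_congr rfl fun j _ => ?_
    rw [key i j, mul_smul_comm, mul_smul_comm, Matrix.trace_smul, Matrix.trace_smul,
      Matrix.trace_mul_comm, mul_assoc, hfs j, mul_smul_comm, Matrix.trace_smul]
    have hlog : Real.log (β j / α i) = - Real.log (α i / β j) := by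
      rw [← Real.log_inv, inv_div]
    simp only [smul_eq_mul, hlog]
    rw [show ((Real.sqrt (β j)) : ℂ) * (((Real.sqrt (β j)) : ℂ) * Matrix.trace (e i * f j)) = (((Real.sqrt (β j)) : ℂ) * ((Real.sqrt (β j)) : ℂ)) * Matrix.trace (e i * f j) from by ring, hsq j]
    push_cast
    ring
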